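/- Each edge is used by at most one agent in the nonconvex formulation: in any feasible point of the nonconvex formulation, Σ_{k ∈ V_agt} y_{e,k} ≤ 1 for every edge e ∈ E. -/

import Mathlib

/-!
Every edge either enters a segment node or leaves a segment node for `s'`. The total inflow
(over all agents) into a segment node is at most the total inflow into its cluster, which is 1,
and by flow conservation its total outflow equals its total inflow.
-/

open scoped BigOperators Classical

noncomputable section

/-- Nodes of the graph: `Sum.inl i` is the segment node `i ∈ V_seg`,
`Sum.inr false` is the depot `s`, and `Sum.inr true` is the depot copy `s'`. -/
abbrev Node (ι : Type*) := ι ⊕ Bool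

variable {ι υ : Type*} [Fintype ι] [Fintype υ]

/-- The edge relation determined by the cluster assignment `cl`: from the depot `s` to
every segment node, between segment nodes in different clusters, and from every
segment node to the depot copy `s'`. -/
def isEdge (cl : ι → υ) : Node ι → Node ι → Prop
  | Sum.inr false, Sum.inl _ => True
  | Sum.inl i, Sum.inl j => cl i ≠ cl j
  | Sum.inl _, Sum.inr true => True
  | _, _ => False

/-- The edge set `E` as a finite set of ordered pairs of nodes. -/
def edges (cl : ι → υ) : Finset (Node ι × Node ι) :=
  Finset.univ.filter fun e => isEdge cl e.1 e.2

/-- `E_i^in`: the edges of `E` entering node `i`. -/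
def inE (cl : ι → υ) (i : Node ι) : Finset (Node ι × Node ι) :=
  (edges cl).filter fun e => e.2 = i

/-- `E_i^out`: the edges of `E` exiting node `i`. -/
def outE (cl : ι → υ) (i : Node ι) : Finset (Node ι × Node ι) :=
  (edges cl).filter fun e => e.1 = i

theorem Finset.sum_apply_le_sum_sum_of_mem {α κ : Type*} [Fintype κ] {s : Finset α}
    {y : α → κ → ℝ} {e : α} (he : e ∈ s) (hnn : ∀ e ∈ s, ∀ k, 0 ≤ y e k) :
    ∑ k, y e k ≤ ∑ k, ∑ e' ∈ s, y e' k := by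
  rw [Finset.sum_comm]
  exact Finset.single_le_sum (f := fun e' => ∑ k, y e' k)
    (fun e' he' => Finset.sum_nonneg fun k _ => hnn e' he' k) he

omit [Fintype ι] [Fintype υ] in
theorem isEdge_cases {cl : ι → υ} {a b : Node ι} (h : isEdge cl a b) :
    (∃ j, b = Sum.inl j) ∨ ∃ i, a = Sum.inl i ∧ b = Sum.inr true := by
  rcases a with i | _ | _ <;> rcases b with j | _ | _ <;> simp_all [isEdge]

omit [Fintype υ] in
theorem inE_subset_edges (cl : ι → υ) (v : Node ι) : inE cl v ⊆ edges cl :=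
  Finset.filter_subset _ _

omit [Fintype υ] in
theorem outE_subset_edges (cl : ι → υ) (v : Node ι) : outE cl v ⊆ edges cl :=
  Finset.filter_subset _ _

omit [Fintype υ] in
theorem sum_inflow_le_one {cl : ι → υ} {m : ℕ} {y : Node ι × Node ι → Fin m → ℝ}
    (hnn : ∀ e ∈ edges cl, ∀ k, 0 ≤ y e k)
    (hclu : ∀ u : υ, ∑ k, ∑ i ∈ Finset.univ.filter (fun i => cl i = u),
        ∑ e ∈ inE cl (Sum.inl i), y e k = 1)
    (j : ι) : ∑ k, ∑ e ∈ inE cl (Sum.inl j), y e k ≤ 1 := by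
  rw [← hclu (cl j)]
  gcongr with k
  exact Finset.single_le_sum (f := fun i => ∑ e ∈ inE cl (Sum.inl i), y e k)
    (fun i _ => Finset.sum_nonneg fun e he => hnn e (inE_subset_edges cl _ he) k) (by simp)

theorem each_edge_used_by_at_most_one_agent_general
    (cl : ι → υ) (m : ℕ)
    (y : Node ι × Node ι → Fin m → ℝ)
    (hbin : ∀ e ∈ edges cl, ∀ k, y e k = 0 ∨ y e k = 1)
    (hclu : ∀ u : υ, ∑ k, ∑ i ∈ Finset.univ.filter (fun i => cl i = u),
        ∑ e ∈ inE cl (Sum.inl i), y e k = 1)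
    (hcons : ∀ i : ι, ∀ k,
        ∑ e ∈ inE cl (Sum.inl i), y e k = ∑ e ∈ outE cl (Sum.inl i), y e k) :
    ∀ e ∈ edges cl, ∑ k, y e k ≤ 1 := by
  have hnn : ∀ e ∈ edges cl, ∀ k, 0 ≤ y e k := fun e he k =>
    (hbin e he k).elim (fun h => h.ge) (fun h => h ▸ zero_le_one)
  rintro ⟨a, b⟩ he
  rcases isEdge_cases (Finset.mem_filter.1 he).2 with ⟨j, rfl⟩ | ⟨i, rfl, rfl⟩
  · calc ∑ k, y (a, Sum.inl j) k
        ≤ ∑ k, ∑ e ∈ inE cl (Sum.inl j), y e k :=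
          Finset.sum_apply_le_sum_sum_of_mem (Finset.mem_filter.2 ⟨he, rfl⟩)
            fun e he' => hnn e (inE_subset_edges cl _ he')
      _ ≤ 1 := sum_inflow_le_one hnn hclu j
  · calc ∑ k, y (Sum.inl i, Sum.inr true) k
        ≤ ∑ k, ∑ e ∈ outE cl (Sum.inl i), y e k :=
          Finset.sum_apply_le_sum_sum_of_mem (Finset.mem_filter.2 ⟨he, rfl⟩)
            fun e he' => hnn e (outE_subset_edges cl _ he')
      _ = ∑ k, ∑ e ∈ inE cl (Sum.inl i), y e k :=
          Finset.sum_congr rfl fun k _ => (hcons i k).symm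
      _ ≤ 1 := sum_inflow_le_one hnn hclu i

/-- **each edge is used by at most one agent.**  For binary variables
`y_{e,k}` satisfying the flow constraints of the nonconvex formulation — at most one
departure from the depot and one arrival at its copy per agent, each cluster entered
exactly once in total, and flow conservation at every segment node — we have
`∑ k, y_{e,k} ≤ 1` for every edge `e ∈ E`. -/
theorem each_edge_used_by_at_most_one_agent
    (cl : ι → υ) (hcl : Function.Surjective cl) (m : ℕ) (hm : 1 ≤ m)
    (y : Node ι × Node ι → Fin m → ℝ)
    (hbin : ∀ e ∈ edges cl, ∀ k, y e k = 0 ∨ y e k = 1)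
    (hdepOut : ∀ k, ∑ e ∈ outE cl (Sum.inr false), y e k ≤ 1)
    (hdepIn : ∀ k, ∑ e ∈ inE cl (Sum.inr true), y e k ≤ 1)
    (hclu : ∀ u : υ, ∑ k, ∑ i ∈ Finset.univ.filter (fun i => cl i = u),
        ∑ e ∈ inE cl (Sum.inl i), y e k = 1)
    (hcons : ∀ i : ι, ∀ k,
        ∑ e ∈ inE cl (Sum.inl i), y e k = ∑ e ∈ outE cl (Sum.inl i), y e k) :
    ∀ e ∈ edges cl, ∑ k, y e k ≤ 1 :=
  each_edge_used_by_at_most_one_agent_general cl m y hbin hclu hcons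

end
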